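/- arXiv:2408.06996 — 3 statements merged into one kernel-verified Lean document; each statement's English description precedes it below -/
import Mathlib

section
/- For every positive integer m there exists a subset G of the hypercube {−1,+1}^m whose cardinality is at least 2^(m/16) and such that for any two distinct elements v, v' of G the ℓ¹ distance satisfies Σ_{i=1}^m |v_i − v'_i| ≥ m/2; equivalently, any two distinct elements of G differ in at least m/4 coordinates. -/
/-!
Gilbert–Varshamov. A maximal set of binary words with pairwise Hamming distance `> r` is covered
by the Hamming balls of radius `r` around its words, so it has at least `2 ^ m / V` elements,
where `V = ∑_{k ≤ r} (m choose k)`. Comparing with the binomial expansion of `(1 + 3) ^ m` gives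
`V * 3 ^ (m - r) ≤ 4 ^ m`, and for `r ≤ m / 4` the resulting bound `3 ^ (m - r) / 2 ^ m` exceeds
`2 ^ (m / 16)` because `2 ^ 17 ≤ 3 ^ 12`. Sending `true, false` to `1, -1` turns Hamming distance
into half the `ℓ¹` distance.
-/

open Finset

theorem sum_range_choose_mul_pow_le (n r b : ℕ) (hr : r ≤ n) (hb : 1 ≤ b) :
    (∑ k ∈ range (r + 1), n.choose k) * b ^ (n - r) ≤ (1 + b) ^ n := by
  rw [add_pow, sum_mul]
  calc ∑ k ∈ range (r + 1), n.choose k * b ^ (n - r)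
      ≤ ∑ k ∈ range (r + 1), 1 ^ k * b ^ (n - k) * n.choose k := by
        refine sum_le_sum fun k hk => ?_
        rw [one_pow, one_mul, mul_comm]
        exact Nat.mul_le_mul_right _ (Nat.pow_le_pow_right hb (by
          have := mem_range.1 hk
          omega))
    _ ≤ ∑ k ∈ range (n + 1), 1 ^ k * b ^ (n - k) * n.choose k :=
        sum_le_sum_of_subset (range_subset_range.2 (Nat.succ_le_succ hr))

section Hamming

variable {ι : Type*} [Fintype ι] [DecidableEq ι]

theorem exists_hammingDist_separated_covering {β : ι → Type*} [∀ i, Fintype (β i)]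
    [∀ i, DecidableEq (β i)] (r : ℕ) :
    ∃ G : Finset (∀ i, β i), (G : Set (∀ i, β i)).Pairwise (fun x y => r < hammingDist x y) ∧
      ∀ x, ∃ g ∈ G, hammingDist x g ≤ r := by
  obtain ⟨G, -, hG⟩ := Finite.exists_le_maximal
    (p := fun G : Finset (∀ i, β i) =>
      (G : Set (∀ i, β i)).Pairwise fun x y => r < hammingDist x y)
    (a := ∅) (by simp)
  refine ⟨G, hG.prop, fun x => ?_⟩
  by_contra! hx
  have hsep : ((insert x G : Finset _) : Set (∀ i, β i)).Pairwise
      (fun x y => r < hammingDist x y) := by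
    rw [coe_insert]
    exact hG.prop.insert fun g hg _ => ⟨hx g hg, hammingDist_comm x g ▸ hx g hg⟩
  have hxG : x ∈ G := hG.eq_of_ge hsep (subset_insert x G) ▸ mem_insert_self x G
  simpa using hx x hxG

theorem card_hammingDist_le_le_sum_choose (x : ι → Bool) (r : ℕ) :
    #{y | hammingDist y x ≤ r} ≤ ∑ k ∈ range (r + 1), (Fintype.card ι).choose k := by
  let support : (ι → Bool) → Finset ι := fun y => {i | y i ≠ x i}
  have hsupport : Set.InjOn support ↑({y | hammingDist y x ≤ r} : Finset (ι → Bool)) := by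
    intro y _ z _ hyz
    funext i
    have := congrArg (i ∈ ·) hyz
    simp only [support, mem_filter, mem_univ, true_and, eq_iff_iff] at this
    revert this
    cases y i <;> cases z i <;> cases x i <;> simp
  calc #{y | hammingDist y x ≤ r}
      ≤ #((range (r + 1)).biUnion fun k => powersetCard k (univ : Finset ι)) :=
        card_le_card_of_injOn support (fun y hy => mem_biUnion.2
          ⟨_, mem_range.2 (Nat.lt_succ_of_le (mem_filter.1 hy).2), mem_powersetCard_univ.2 rfl⟩)
          hsupport
    _ = ∑ k ∈ range (r + 1), (Fintype.card ι).choose k := by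
        rw [card_biUnion fun a _ b _ hab => pairwise_disjoint_powersetCard univ hab]
        simp

theorem exists_binary_code_card_mul_four_pow_ge (r : ℕ) (hr : r ≤ Fintype.card ι) :
    ∃ G : Finset (ι → Bool), (G : Set (ι → Bool)).Pairwise (fun x y => r < hammingDist x y) ∧
      2 ^ Fintype.card ι * 3 ^ (Fintype.card ι - r) ≤ #G * 4 ^ Fintype.card ι := by
  set n := Fintype.card ι
  obtain ⟨G, hsep, hcover⟩ := exists_hammingDist_separated_covering (ι := ι) (β := fun _ => Bool) r
  refine ⟨G, hsep, ?_⟩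
  have hballs : 2 ^ n ≤ #G * ∑ k ∈ range (r + 1), n.choose k := by
    calc 2 ^ n = #(univ : Finset (ι → Bool)) := by simp [n]
      _ ≤ #(G.biUnion fun g => ({y | hammingDist y g ≤ r} : Finset (ι → Bool))) :=
        card_le_card fun x _ => by
          obtain ⟨g, hg, hxg⟩ := hcover x
          exact mem_biUnion.2 ⟨g, hg, mem_filter.2 ⟨mem_univ x, hxg⟩⟩
      _ ≤ #G * ∑ k ∈ range (r + 1), n.choose k :=
          card_biUnion_le_card_mul _ _ _ fun g _ => card_hammingDist_le_le_sum_choose g r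
  calc 2 ^ n * 3 ^ (n - r) ≤ #G * ((∑ k ∈ range (r + 1), n.choose k) * 3 ^ (n - r)) := by
        rw [← mul_assoc]; gcongr
    _ ≤ #G * 4 ^ n := by
        gcongr
        exact sum_range_choose_mul_pow_le n r 3 hr (by norm_num)

end Hamming

theorem two_rpow_div_sixteen_mul_two_pow_le (n r : ℕ) (h : 4 * r ≤ n) :
    (2 : ℝ) ^ ((n : ℝ) / 16) * 2 ^ n ≤ 3 ^ (n - r) := by
  have hexp : (3 / 4 : ℝ) * n ≤ ((n - r : ℕ) : ℝ) := by
    rw [Nat.cast_sub (by omega)]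
    have : (4 * r : ℝ) ≤ n := by exact_mod_cast h
    linarith
  calc (2 : ℝ) ^ ((n : ℝ) / 16) * 2 ^ n = ((2 : ℝ) ^ 17) ^ ((n : ℝ) / 16) := by
        rw [← Real.rpow_natCast, ← Real.rpow_natCast, ← Real.rpow_mul (by norm_num),
          ← Real.rpow_add (by norm_num)]
        ring_nf
    _ ≤ ((3 : ℝ) ^ 12) ^ ((n : ℝ) / 16) := by gcongr; norm_num
    _ = (3 : ℝ) ^ ((3 / 4 : ℝ) * n) := by
        rw [← Real.rpow_natCast, ← Real.rpow_mul (by norm_num)]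
        ring_nf
    _ ≤ (3 : ℝ) ^ ((n - r : ℕ) : ℝ) := Real.rpow_le_rpow_of_exponent_le (by norm_num) hexp
    _ = 3 ^ (n - r) := Real.rpow_natCast _ _

def boolToSign : Bool ↪ ℝ where
  toFun b := if b then 1 else -1
  inj' a b h := by cases a <;> cases b <;> first | rfl | norm_num at h

@[simp]
theorem boolToSign_apply (b : Bool) : boolToSign b = if b then 1 else -1 := rfl

theorem abs_boolToSign_sub (a b : Bool) :
    |boolToSign a - boolToSign b| = if a = b then 0 else 2 := by
  cases a <;> cases b <;> norm_num

theorem sum_abs_boolToSign_sub {ι : Type*} [Fintype ι] (x y : ι → Bool) :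
    ∑ i, |boolToSign (x i) - boolToSign (y i)| = 2 * hammingDist x y := by
  simp_rw [abs_boolToSign_sub, hammingDist, sum_ite, sum_const_zero, sum_const, nsmul_eq_mul]
  ring

theorem exists_separated_hypercube_subset_general (m : ℕ) :
    ∃ G : Finset (Fin m → ℝ),
      (∀ v ∈ G, ∀ i, v i = 1 ∨ v i = -1) ∧
      (2 : ℝ) ^ ((m : ℝ) / 16) ≤ (G.card : ℝ) ∧
      (∀ v ∈ G, ∀ v' ∈ G, v ≠ v' → (m : ℝ) / 2 ≤ ∑ i, |v i - v' i|) ∧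
      (∀ v ∈ G, ∀ v' ∈ G, v ≠ v' →
        (m : ℝ) / 4 ≤ ((Finset.univ.filter fun i => v i ≠ v' i).card : ℝ)) := by
  -- `r + 1 = ⌈m / 4⌉`, while still `4 * r ≤ m`.
  set r := (m - 1) / 4
  obtain ⟨G, hsep, hcard⟩ := exists_binary_code_card_mul_four_pow_ge (ι := Fin m) r
    (by simp only [Fintype.card_fin]; omega)
  simp only [Fintype.card_fin] at hcard
  have hdist : ∀ x ∈ G, ∀ y ∈ G, x ≠ y → (m : ℝ) ≤ 4 * hammingDist x y := by
    intro x hx y hy hxy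
    have := hsep hx hy hxy
    exact_mod_cast (by omega : m ≤ 4 * hammingDist x y)
  refine ⟨G.map boolToSign.arrowCongrRight, ?_, ?_, ?_, ?_⟩
  · simp only [mem_map]
    rintro _ ⟨x, -, rfl⟩ i
    by_cases h : x i <;> simp [h]
  · rw [card_map]
    refine le_of_mul_le_mul_right ?_ (pow_pos (by norm_num : (0 : ℝ) < 4) m)
    calc (2 : ℝ) ^ ((m : ℝ) / 16) * 4 ^ m = 2 ^ ((m : ℝ) / 16) * 2 ^ m * 2 ^ m := by
          rw [show (4 : ℝ) = 2 * 2 by norm_num, mul_pow, mul_assoc]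
      _ ≤ 3 ^ (m - r) * 2 ^ m := by
          gcongr; exact two_rpow_div_sixteen_mul_two_pow_le m r (by omega)
      _ ≤ #G * 4 ^ m := by rw [mul_comm]; exact_mod_cast hcard
  · simp only [mem_map]
    rintro _ ⟨x, hx, rfl⟩ _ ⟨y, hy, rfl⟩ hxy
    have := hdist x hx y hy (fun h => hxy (h ▸ rfl))
    simp only [Function.Embedding.arrowCongrRight_apply, Function.comp_apply,
      sum_abs_boolToSign_sub]
    linarith
  · simp only [mem_map]
    rintro _ ⟨x, hx, rfl⟩ _ ⟨y, hy, rfl⟩ hxy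
    have := hdist x hx y hy (fun h => hxy (h ▸ rfl))
    change (m : ℝ) / 4 ≤ hammingDist (fun i => boolToSign (x i)) (fun i => boolToSign (y i))
    rw [hammingDist_comp (fun _ => boolToSign) fun _ => boolToSign.injective]
    linarith

/-- There exists a subset `G` of the hypercube `{-1,+1}^m` of cardinality at least
`2^(m/16)` such that any two distinct elements are at `ℓ¹` distance at least `m/2`
(equivalently, differ in at least `m/4` coordinates). -/
theorem exists_separated_hypercube_subset (m : ℕ) (hm : 1 ≤ m) :
    ∃ G : Finset (Fin m → ℝ),
      (∀ v ∈ G, ∀ i, v i = 1 ∨ v i = -1) ∧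
      (2 : ℝ) ^ ((m : ℝ) / 16) ≤ (G.card : ℝ) ∧
      (∀ v ∈ G, ∀ v' ∈ G, v ≠ v' → (m : ℝ) / 2 ≤ ∑ i, |v i - v' i|) ∧
      (∀ v ∈ G, ∀ v' ∈ G, v ≠ v' →
        (m : ℝ) / 4 ≤ ((Finset.univ.filter fun i => v i ≠ v' i).card : ℝ)) :=
  exists_separated_hypercube_subset_general m
end

section
/- Let X be a set and let H' be a finite-dimensional linear subspace, of dimension n, of the real vector space of all functions from X to ℝ. Then the pseudo-dimension of H' equals n: there exists a list of n points of X that is P-shattered by H', and no list of n+1 points of X is P-shattered by H'. -/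
/-- A finite list of points `x₁,…,x_k` is P-shattered by a class `H` of real-valued
functions if there are thresholds `s₁,…,s_k` such that every sign pattern is realized,
where `sign t = +1` iff `t ≥ 0`. -/
def PShatters {X : Type*} (H : Set (X → ℝ)) {k : ℕ} (x : Fin k → X) : Prop :=
  ∃ s : Fin k → ℝ, ∀ σ : Fin k → Bool, ∃ h ∈ H, ∀ i, (σ i = true ↔ s i ≤ h (x i))

/-!
Restricting `H'` to points `x₁, …, x_k` gives a subspace of `ℝᵏ` of dimension at most `n`, and
`H'` P-shatters the points iff this subspace P-shatters the coordinates. A proper subspace of `ℝᵏ`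
is annihilated by some `c ≠ 0`, which we may take with a negative entry. Realizing the sign
patterns of `c` and of `-c` above the thresholds `s` then gives `c ⬝ᵥ s < 0 ≤ c ⬝ᵥ s`.
Conversely, the point evaluations span the dual of `H'`, so `n` of them form a basis of it; at
those points the restriction is injective, hence onto `ℝⁿ`, which is P-shattered at thresholds `0`.
-/

open Module Submodule

section Evaluation

variable {K X : Type*} [Field K] (V : Submodule K (X → K))

noncomputable def evalAt (x : X) : Dual K V :=
  LinearMap.proj x ∘ₗ V.subtype

variable [FiniteDimensional K V]

theorem span_range_evalAt : span K (Set.range (evalAt V)) = ⊤ := by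
  refine span_eq_top_of_ne_zero fun v hv ↦ ?_
  obtain ⟨x, hx⟩ := Function.ne_iff.mp (Subtype.coe_ne_coe.mpr hv)
  exact ⟨evalAt V x, ⟨x, rfl⟩, hx⟩

theorem injective_funLeft_comp_subtype {ι : Type*} {x : ι → X}
    (hx : span K (Set.range (evalAt V ∘ x)) = ⊤) :
    Function.Injective (LinearMap.funLeft K K x ∘ₗ V.subtype) := by
  rw [← LinearMap.ker_eq_bot, eq_bot_iff]
  intro v hv
  have hvanish : v ∈ (span K (Set.range (evalAt V ∘ x))).dualCoannihilator := by
    rw [← SetLike.mem_coe, coe_dualCoannihilator_span]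
    rintro _ ⟨i, rfl⟩
    exact congr_fun hv i
  rwa [hx, dualCoannihilator_top] at hvanish

theorem exists_map_funLeft_eq_top {n : ℕ} (hn : finrank K V = n) :
    ∃ x : Fin n → X, V.map (LinearMap.funLeft K K x) = ⊤ := by
  obtain ⟨κ, a, -, hspan, hli⟩ := exists_linearIndependent' K (evalAt V)
  rw [span_range_evalAt] at hspan
  let b := Basis.mk hli hspan.ge
  have : Fintype κ := FiniteDimensional.fintypeBasisIndex b
  have hcard : Fintype.card κ = n := by
    rw [← finrank_eq_card_basis b, Subspace.dual_finrank_eq, hn]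
  let e : Fin n ≃ κ := (Fintype.equivFinOfCardEq hcard).symm
  refine ⟨a ∘ e, ?_⟩
  have hx : span K (Set.range (evalAt V ∘ a ∘ e)) = ⊤ := by
    rw [← Function.comp_assoc, e.surjective.range_comp, hspan]
  have hrank : finrank K V = finrank K (Fin n → K) := by rw [hn, finrank_fin_fun]
  rw [← range_subtype V, ← LinearMap.range_comp, LinearMap.range_eq_top]
  exact (LinearMap.injective_iff_surjective_of_finrank_eq_finrank hrank).mp
    (injective_funLeft_comp_subtype V hx)

end Evaluation

theorem exists_dotProduct_eq_zero_of_ne_top {K ι : Type*} [Field K] [Fintype ι] [DecidableEq ι]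
    {W : Submodule K (ι → K)} (hW : W ≠ ⊤) : ∃ c ≠ 0, ∀ w ∈ W, c ⬝ᵥ w = 0 := by
  obtain ⟨f, hf, hfW⟩ := exists_dual_map_eq_bot_of_lt_top hW.lt_top inferInstance
  refine ⟨(dotProductEquiv K ι).symm f, by simpa using hf, fun w hw ↦ ?_⟩
  have hfw : f w = 0 := by simpa [hfW] using mem_map_of_mem (f := f) hw
  rw [← hfw, ← (dotProductEquiv K ι).apply_symm_apply f]
  simp only [LinearEquiv.symm_apply_apply, dotProductEquiv_apply_apply]

section Signs

variable {R : Type*} [CommRing R] [LinearOrder R] [IsStrictOrderedRing R]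

theorem mul_sub_nonneg_of_pos_iff_le {c s w : R} (h : 0 < c ↔ s ≤ w) : 0 ≤ c * (w - s) := by
  rcases lt_or_ge 0 c with hc | hc
  · exact mul_nonneg hc.le (sub_nonneg.mpr (h.mp hc))
  · exact mul_nonneg_of_nonpos_of_nonpos hc (sub_nonpos.mpr (not_le.mp (h.not.mp hc.not_gt)).le)

theorem mul_sub_pos_of_pos_iff_le {c s w : R} (h : 0 < c ↔ s ≤ w) (hc : c < 0) :
    0 < c * (w - s) :=
  mul_pos_of_neg_of_neg hc (sub_neg.mpr (not_le.mp (h.not.mp hc.not_gt)))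

variable {ι : Type*} [Fintype ι] {c s w : ι → R}

theorem dotProduct_sub_nonneg_of_pos_iff_le (h : ∀ i, (0 < c i ↔ s i ≤ w i)) :
    0 ≤ c ⬝ᵥ (w - s) :=
  Finset.sum_nonneg fun i _ ↦ mul_sub_nonneg_of_pos_iff_le (h i)

theorem dotProduct_sub_pos_of_pos_iff_le (h : ∀ i, (0 < c i ↔ s i ≤ w i)) {j : ι}
    (hj : c j < 0) : 0 < c ⬝ᵥ (w - s) :=
  Finset.sum_pos' (fun i _ ↦ mul_sub_nonneg_of_pos_iff_le (h i))
    ⟨j, Finset.mem_univ j, mul_sub_pos_of_pos_iff_le (h j) hj⟩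

end Signs

theorem pShatters_iff_map_funLeft {X : Type*} (H : Submodule ℝ (X → ℝ)) {k : ℕ}
    (x : Fin k → X) :
    PShatters (H : Set (X → ℝ)) x ↔
      PShatters (H.map (LinearMap.funLeft ℝ ℝ x) : Set (Fin k → ℝ)) id := by
  simp [PShatters]

theorem pShatters_univ (k : ℕ) : PShatters (Set.univ : Set (Fin k → ℝ)) id :=
  ⟨0, fun σ ↦ ⟨fun i ↦ if σ i then 1 else -1, trivial, fun i ↦ by cases h : σ i <;> simp [h]⟩⟩

theorem not_pShatters_of_ne_top {k : ℕ} {W : Submodule ℝ (Fin k → ℝ)} (hW : W ≠ ⊤) :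
    ¬ PShatters (W : Set (Fin k → ℝ)) id := by
  rintro ⟨s, hs⟩
  obtain ⟨c, ⟨j, hj⟩, hcW⟩ : ∃ c : Fin k → ℝ, (∃ j, c j < 0) ∧ ∀ w ∈ W, c ⬝ᵥ w = 0 := by
    obtain ⟨c, hc, hcW⟩ := exists_dotProduct_eq_zero_of_ne_top hW
    obtain ⟨j, hj⟩ := Function.ne_iff.mp hc
    rcases hj.lt_or_gt with hneg | hpos
    · exact ⟨c, ⟨j, hneg⟩, hcW⟩
    · exact ⟨-c, ⟨j, neg_neg_of_pos hpos⟩, fun w hw ↦ by rw [neg_dotProduct, hcW w hw, neg_zero]⟩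
  obtain ⟨w₁, hw₁, h₁⟩ := hs fun i ↦ decide (0 < c i)
  obtain ⟨w₂, hw₂, h₂⟩ := hs fun i ↦ decide (0 < -c i)
  have hpos := dotProduct_sub_pos_of_pos_iff_le (fun i ↦ by simpa using h₁ i) hj
  have hnonneg := dotProduct_sub_nonneg_of_pos_iff_le (c := -c) (fun i ↦ by simpa using h₂ i)
  simp only [dotProduct_sub, neg_dotProduct, hcW w₁ hw₁, hcW w₂ hw₂] at hpos hnonneg
  linarith

/-- An `n`-dimensional linear subspace of the real-valued functions on `X` has
pseudo-dimension exactly `n`: some list of `n` points is P-shattered, and no list of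
`n+1` points is P-shattered. -/
theorem pseudoDim_of_vectorSpace {X : Type*} (H' : Submodule ℝ (X → ℝ)) (n : ℕ)
    [FiniteDimensional ℝ H'] (hn : Module.finrank ℝ H' = n) :
    (∃ x : Fin n → X, PShatters (H' : Set (X → ℝ)) x) ∧
    (∀ x : Fin (n + 1) → X, ¬ PShatters (H' : Set (X → ℝ)) x) := by
  refine ⟨?_, fun x ↦ ?_⟩
  · obtain ⟨x, hx⟩ := exists_map_funLeft_eq_top H' hn
    refine ⟨x, ?_⟩
    rw [pShatters_iff_map_funLeft, hx, top_coe]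
    exact pShatters_univ n
  · rw [pShatters_iff_map_funLeft]
    refine not_pShatters_of_ne_top fun htop ↦ ?_
    have := finrank_map_le (LinearMap.funLeft ℝ ℝ x) H'
    rw [htop, finrank_top, finrank_fin_fun, hn] at this
    omega
end

section
/- Let X be a set, let H' be a finite-dimensional linear subspace, of dimension n, of the real vector space of all functions from X to ℝ, and let H be any subset of H'. Then no list of n+1 points of X is P-shattered by H; that is, the pseudo-dimension of H is at most n. -/
/-- A subset `H` of an `n`-dimensional linear subspace of the real-valued functions on
`X` has pseudo-dimension at most `n`: no list of `n+1` points is P-shattered by `H`,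
i.e. any P-shattered list has at most `n` points. -/
theorem pseudoDim_le_of_subset_vectorSpace {X : Type*}
    (H' : Submodule ℝ (X → ℝ)) (n : ℕ)
    [FiniteDimensional ℝ H'] (hn : Module.finrank ℝ H' = n)
    (H : Set (X → ℝ)) (hH : H ⊆ (H' : Set (X → ℝ))) :
    (∀ x : Fin (n + 1) → X, ¬ PShatters H x) ∧
    (∀ (k : ℕ) (x : Fin k → X), PShatters H x → k ≤ n) := by
  have key : ∀ x : Fin (n + 1) → X, ¬ PShatters H x := by
    intro x hx
    obtain ⟨s, hs⟩ := hx
    -- evaluation functionals on H'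
    set E : Fin (n + 1) → Module.Dual ℝ H' :=
      fun i => (LinearMap.proj (x i)).comp H'.subtype with hEdef
    have hdep : ¬ LinearIndependent ℝ E := by
      intro hli
      have := hli.fintype_card_le_finrank
      rw [Subspace.dual_finrank_eq, hn, Fintype.card_fin] at this
      omega
    rw [Fintype.not_linearIndependent_iff] at hdep
    obtain ⟨a, ha, j, haj⟩ := hdep
    -- a gives a linear dependence among evaluations
    have hsum : ∀ h ∈ H, ∑ i, a i * h (x i) = 0 := by
      intro h hh
      have := congrArg (fun f => f ⟨h, hH hh⟩) ha
      simpa [E, LinearMap.sum_apply] using this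
    -- pattern σ : true iff a i > 0
    obtain ⟨h₁, hh₁, hσ₁⟩ := hs (fun i => decide (0 < a i))
    obtain ⟨h₂, hh₂, hσ₂⟩ := hs (fun i => decide (a i < 0))
    have hle1 : ∀ i, a i * s i ≤ a i * h₁ (x i) := by
      intro i
      rcases lt_trichotomy (a i) 0 with hlt | heq | hgt
      · have hcon : ¬ (s i ≤ h₁ (x i)) := by
          intro hcon
          have := (hσ₁ i).mpr hcon
          simp at this; linarith
        push_neg at hcon
        exact (mul_lt_mul_of_neg_left hcon hlt).le
      · simp [heq]
      · have : s i ≤ h₁ (x i) := (hσ₁ i).mp (by simp [hgt])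
        exact mul_le_mul_of_nonneg_left this hgt.le
    have hle2 : ∀ i, a i * h₂ (x i) ≤ a i * s i := by
      intro i
      rcases lt_trichotomy (a i) 0 with hlt | heq | hgt
      · have : s i ≤ h₂ (x i) := (hσ₂ i).mp (by simp [hlt])
        exact mul_le_mul_of_nonpos_left this hlt.le
      · simp [heq]
      · have hcon : ¬ (s i ≤ h₂ (x i)) := by
          intro hcon
          have := (hσ₂ i).mpr hcon
          simp at this; linarith
        push_neg at hcon
        exact (mul_lt_mul_of_pos_left hcon hgt).le
    have hA : ∑ i, a i * s i ≤ 0 := by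
      have := Finset.sum_le_sum (s := Finset.univ) (fun i _ => hle1 i)
      rw [hsum h₁ hh₁] at this
      linarith
    have hB : (0:ℝ) ≤ ∑ i, a i * s i := by
      have := Finset.sum_le_sum (s := Finset.univ) (fun i _ => hle2 i)
      rw [hsum h₂ hh₂] at this
      linarith
    rcases lt_or_gt_of_ne haj with hjneg | hjpos
    · -- a j < 0 : strict inequality in hle1 at j
      have hstrict : a j * s j < a j * h₁ (x j) := by
        have hcon : ¬ (s j ≤ h₁ (x j)) := by
          intro hcon
          have := (hσ₁ j).mpr hcon
          simp at this; linarith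
        push_neg at hcon
        exact mul_lt_mul_of_neg_left hcon hjneg
      have : ∑ i, a i * s i < ∑ i, a i * h₁ (x i) :=
        Finset.sum_lt_sum (fun i _ => hle1 i) ⟨j, Finset.mem_univ j, hstrict⟩
      rw [hsum h₁ hh₁] at this
      linarith
    · -- a j > 0 : strict inequality in hle2 at j
      have hstrict : a j * h₂ (x j) < a j * s j := by
        have hcon : ¬ (s j ≤ h₂ (x j)) := by
          intro hcon
          have := (hσ₂ j).mpr hcon
          simp at this; linarith
        push_neg at hcon
        exact mul_lt_mul_of_pos_left hcon hjpos
      have : ∑ i, a i * h₂ (x i) < ∑ i, a i * s i :=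
        Finset.sum_lt_sum (fun i _ => hle2 i) ⟨j, Finset.mem_univ j, hstrict⟩
      rw [hsum h₂ hh₂] at this
      linarith
  refine ⟨key, fun k x hsh => ?_⟩
  by_contra hk
  push_neg at hk
  have hle : n + 1 ≤ k := hk
  apply key (fun i => x (Fin.castLE hle i))
  obtain ⟨s, hs⟩ := hsh
  refine ⟨fun i => s (Fin.castLE hle i), fun σ => ?_⟩
  obtain ⟨h, hh, hσ⟩ := hs (fun j => if hj : (j : ℕ) < n + 1 then σ ⟨j, hj⟩ else false)
  refine ⟨h, hh, fun i => ?_⟩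
  have := hσ (Fin.castLE hle i)
  simpa [Fin.castLE, i.isLt] using this
end
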